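/- arXiv:1809.01788 — 2 statements merged into one kernel-verified Lean document; each statement's English description precedes it below -/
import Mathlib

section
/- Let T : L¹(Ω,μ) → L¹(Ω,μ) be a linear map that is simultaneously an L¹-contraction and an L^∞-contraction on L¹ ∩ L^∞ (a Dunford–Schwartz operator). Then for every 1 ≤ p ≤ ∞, T maps L¹ ∩ L^p into itself and ‖T f‖_p ≤ ‖f‖_p for all f ∈ L¹ ∩ L^p. -/
/-!
Truncating `f` radially at height `t > 0` splits it as `f = g + h` with `‖h‖_∞ ≤ t` and
`|g| = (|f| - t)₊`, so the two contraction properties give `∫ (|Tf| - t)₊ ≤ ∫ (|f| - t)₊`.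
For `1 < p < ∞` these inequalities integrate against `t ^ (p - 2) dt` to `‖Tf‖_p ≤ ‖f‖_p`,
since `∫₀^∞ t ^ (p - 2) (a - t)₊ dt = a ^ p / (p (p - 1))`.
-/

open MeasureTheory ENNReal Set

section LayerCake

variable {q x : ℝ}

theorem rpow_sub_two_mul_sub_eq {t : ℝ} (ht : 0 < t) :
    t ^ (q - 2) * (x - t) = x * t ^ (q - 2) - t ^ (q - 1) := by
  rw [show q - 1 = (q - 2) + 1 by ring, Real.rpow_add_one ht.ne']
  ring

theorem integrableOn_Ioc_rpow (hx : 0 ≤ x) {r : ℝ} (hr : -1 < r) :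
    IntegrableOn (fun t : ℝ => t ^ r) (Ioc 0 x) :=
  (intervalIntegrable_iff_integrableOn_Ioc_of_le hx).mp
    (intervalIntegral.intervalIntegrable_rpow' hr)

theorem integrableOn_Ioc_rpow_sub_two_mul_sub (hq : 1 < q) (hx : 0 ≤ x) :
    IntegrableOn (fun t => t ^ (q - 2) * (x - t)) (Ioc 0 x) :=
  IntegrableOn.congr_fun (((integrableOn_Ioc_rpow hx (by linarith)).const_mul x).sub
    (integrableOn_Ioc_rpow hx (by linarith)))
      (fun _ ht => (rpow_sub_two_mul_sub_eq ht.1).symm) measurableSet_Ioc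

theorem integral_Ioc_rpow_sub_two_mul_sub (hq : 1 < q) (hx : 0 ≤ x) :
    ∫ t in Ioc 0 x, t ^ (q - 2) * (x - t) = x ^ q / (q * (q - 1)) := by
  rw [setIntegral_congr_fun measurableSet_Ioc fun _ ht => rpow_sub_two_mul_sub_eq ht.1,
    integral_sub ((integrableOn_Ioc_rpow hx (by linarith)).const_mul x)
      (integrableOn_Ioc_rpow hx (by linarith)),
    integral_const_mul, ← intervalIntegral.integral_of_le hx,
    ← intervalIntegral.integral_of_le hx, integral_rpow (Or.inl (by linarith)),
    integral_rpow (Or.inl (by linarith)), Real.zero_rpow (by linarith),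
    Real.zero_rpow (by linarith), show q - 2 + 1 = q - 1 by ring, show q - 1 + 1 = q by ring]
  rcases hx.eq_or_lt with rfl | hx
  · simp [Real.zero_rpow (by linarith : q ≠ 0)]
  have : q - 1 ≠ 0 := by linarith
  rw [Real.rpow_sub_one hx.ne']
  field_simp
  ring

theorem ofReal_mul_lintegral_Ioi_rpow_mul_tsub (hq : 1 < q) (a : ℝ≥0∞) :
    ENNReal.ofReal (q * (q - 1)) *
      ∫⁻ t in Ioi 0, ENNReal.ofReal (t ^ (q - 2)) * (a - ENNReal.ofReal t) = a ^ q := by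
  have hc : 0 < q * (q - 1) := by nlinarith
  rcases eq_or_ne a ⊤ with rfl | ha
  · have htop : ∀ t ∈ Ioi (0 : ℝ), ENNReal.ofReal (t ^ (q - 2)) * (⊤ - ENNReal.ofReal t) = ⊤ :=
      fun t ht => by simp [Real.rpow_pos_of_pos (mem_Ioi.mp ht)]
    rw [setLIntegral_congr_fun measurableSet_Ioi htop, setLIntegral_const, Real.volume_Ioi,
      top_mul_top, mul_top (by simpa using hc), top_rpow_of_pos (by linarith)]
  obtain ⟨x, hx, rfl⟩ : ∃ x, 0 ≤ x ∧ a = ENNReal.ofReal x :=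
    ⟨a.toReal, toReal_nonneg, (ofReal_toReal ha).symm⟩
  have hIoi : ∫⁻ t in Ioi 0, ENNReal.ofReal (t ^ (q - 2)) * (ENNReal.ofReal x - ENNReal.ofReal t)
      = ∫⁻ t in Ioc 0 x, ENNReal.ofReal (t ^ (q - 2) * (x - t)) := by
    rw [← Ioc_union_Ioi_eq_Ioi hx, lintegral_union measurableSet_Ioi (Ioc_disjoint_Ioi le_rfl),
      setLIntegral_congr_fun measurableSet_Ioi (g := fun _ => 0) fun t ht => ?_, lintegral_zero,
      add_zero]
    · refine setLIntegral_congr_fun measurableSet_Ioc fun t ht => ?_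
      rw [← ofReal_sub _ ht.1.le, ← ofReal_mul (Real.rpow_nonneg ht.1.le _)]
    · simp [tsub_eq_zero_of_le (ofReal_le_ofReal (mem_Ioi.mp ht).le)]
  have hnonneg : 0 ≤ᵐ[volume.restrict (Ioc 0 x)] fun t : ℝ => t ^ (q - 2) * (x - t) :=
    (ae_restrict_iff' measurableSet_Ioc).mpr <| ae_of_all _ fun t ht =>
      mul_nonneg (Real.rpow_nonneg ht.1.le _) (sub_nonneg.mpr ht.2)
  rw [hIoi, ← ofReal_integral_eq_lintegral_ofReal
      (integrableOn_Ioc_rpow_sub_two_mul_sub hq hx) hnonneg,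
    integral_Ioc_rpow_sub_two_mul_sub hq hx, ← ofReal_mul hc.le, mul_div_cancel₀ _ hc.ne',
    ofReal_rpow_of_nonneg hx (by linarith)]

end LayerCake


theorem lintegral_rpow_eq_ofReal_mul_lintegral_tsub {α : Type*} [MeasurableSpace α]
    {μ : Measure α} [SFinite μ] {q : ℝ} (hq : 1 < q) {u : α → ℝ≥0∞} (hu : AEMeasurable u μ) :
    ∫⁻ ω, u ω ^ q ∂μ = ENNReal.ofReal (q * (q - 1)) *
      ∫⁻ t in Ioi 0, ENNReal.ofReal (t ^ (q - 2)) * ∫⁻ ω, (u ω - ENNReal.ofReal t) ∂μ := by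
  have hmeas : AEMeasurable (Function.uncurry fun (t : ℝ) (ω : α) =>
      ENNReal.ofReal (t ^ (q - 2)) * (u ω - ENNReal.ofReal t))
      ((volume.restrict (Ioi 0)).prod μ) :=
    (measurable_fst.pow_const _).ennreal_ofReal.aemeasurable.mul
      (hu.comp_snd.sub measurable_fst.ennreal_ofReal.aemeasurable)
  calc ∫⁻ ω, u ω ^ q ∂μ
      = ∫⁻ ω, ENNReal.ofReal (q * (q - 1)) *
          (∫⁻ t in Ioi 0, ENNReal.ofReal (t ^ (q - 2)) * (u ω - ENNReal.ofReal t)) ∂μ := by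
        simp only [ofReal_mul_lintegral_Ioi_rpow_mul_tsub hq]
    _ = ENNReal.ofReal (q * (q - 1)) *
          ∫⁻ t in Ioi 0, ∫⁻ ω, ENNReal.ofReal (t ^ (q - 2)) * (u ω - ENNReal.ofReal t) ∂μ := by
        rw [lintegral_const_mul' _ _ ofReal_ne_top, lintegral_lintegral_swap hmeas]
    _ = _ := by simp only [lintegral_const_mul' _ _ ofReal_ne_top]

theorem lintegral_rpow_le_of_lintegral_tsub_le {α : Type*} [MeasurableSpace α]
    {μ : Measure α} [SFinite μ] {q : ℝ} (hq : 1 < q) {u v : α → ℝ≥0∞} (hu : AEMeasurable u μ)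
    (hv : AEMeasurable v μ)
    (h : ∀ t : ℝ, 0 < t → ∫⁻ ω, (u ω - ENNReal.ofReal t) ∂μ ≤ ∫⁻ ω, (v ω - ENNReal.ofReal t) ∂μ) :
    ∫⁻ ω, u ω ^ q ∂μ ≤ ∫⁻ ω, v ω ^ q ∂μ := by
  rw [lintegral_rpow_eq_ofReal_mul_lintegral_tsub hq hu,
    lintegral_rpow_eq_ofReal_mul_lintegral_tsub hq hv]
  exact mul_le_mul_right (setLIntegral_mono' measurableSet_Ioi fun t ht =>
    mul_le_mul_right (h t ht) _) _

section RadialTrunc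

variable {E : Type*} [NormedAddCommGroup E] [NormedSpace ℝ E] {t : ℝ}

noncomputable def radialTrunc (t : ℝ) (z : E) : E :=
  if ‖z‖ ≤ t then z else (t / ‖z‖) • z

theorem radialTrunc_of_lt {z : E} (hz : t < ‖z‖) :
    radialTrunc t z = (t / ‖z‖) • z := if_neg hz.not_ge

theorem norm_radialTrunc_of_lt {z : E} (ht : 0 ≤ t) (hz : t < ‖z‖) : ‖radialTrunc t z‖ = t := by
  rw [radialTrunc_of_lt hz, norm_smul, Real.norm_of_nonneg (by positivity),
    div_mul_cancel₀ _ (ht.trans_lt hz).ne']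

theorem norm_radialTrunc_le (ht : 0 ≤ t) (z : E) : ‖radialTrunc t z‖ ≤ t := by
  rcases le_or_gt ‖z‖ t with hz | hz
  · rwa [radialTrunc, if_pos hz]
  · exact (norm_radialTrunc_of_lt ht hz).le

theorem norm_radialTrunc_le_norm (ht : 0 ≤ t) (z : E) : ‖radialTrunc t z‖ ≤ ‖z‖ := by
  rcases le_or_gt ‖z‖ t with hz | hz
  · rw [radialTrunc, if_pos hz]
  · exact (norm_radialTrunc_of_lt ht hz).trans_le hz.le

theorem enorm_sub_radialTrunc (ht : 0 ≤ t) (z : E) :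
    ‖z - radialTrunc t z‖ₑ = ‖z‖ₑ - ENNReal.ofReal t := by
  rcases le_or_gt ‖z‖ t with hz | hz
  · rw [radialTrunc, if_pos hz, sub_self, enorm_zero, eq_comm, tsub_eq_zero_iff_le,
      ← ofReal_norm]
    exact ofReal_le_ofReal hz
  · have hz0 : 0 < ‖z‖ := ht.trans_lt hz
    have hcoef : 0 ≤ 1 - t / ‖z‖ := by rw [sub_nonneg, div_le_one hz0]; exact hz.le
    have hsub : z - (t / ‖z‖) • z = (1 - t / ‖z‖) • z := by rw [sub_smul, one_smul]
    rw [← ofReal_norm, ← ofReal_norm, ← ofReal_sub _ ht, radialTrunc_of_lt hz, hsub, norm_smul,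
      Real.norm_of_nonneg hcoef, sub_mul, one_mul, div_mul_cancel₀ _ hz0.ne']

theorem continuous_radialTrunc (ht : 0 < t) : Continuous (radialTrunc (E := E) t) := by
  refine continuous_if_le continuous_norm continuous_const continuousOn_id ?_ fun z hz => ?_
  · exact (continuousOn_const.div continuous_norm.continuousOn fun z hz =>
      (ht.trans_le hz).ne').smul continuousOn_id
  · rw [hz, div_self ht.ne', one_smul]

end RadialTrunc

theorem Lp.eLpNorm_le_eLpNorm_of_norm_le {α E : Type*} [MeasurableSpace α] {μ : Measure α}
    [NormedAddCommGroup E] {p : ℝ≥0∞} {f g : Lp E p μ} (h : ‖f‖ ≤ ‖g‖) :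
    eLpNorm f p μ ≤ eLpNorm g p μ := by
  rwa [Lp.norm_def, Lp.norm_def, toReal_le_toReal (Lp.eLpNorm_ne_top _) (Lp.eLpNorm_ne_top _)] at h

theorem lintegral_enorm_tsub_le_of_contraction {α E : Type*} [MeasurableSpace α]
    {μ : Measure α} [NormedAddCommGroup E] [NormedSpace ℝ E] (T : Lp E 1 μ →+ Lp E 1 μ)
    (hL1 : ∀ f, ‖T f‖ ≤ ‖f‖)
    (hLinf : ∀ f : Lp E 1 μ, MemLp f ∞ μ → eLpNorm (T f) ∞ μ ≤ eLpNorm f ∞ μ)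
    (f : Lp E 1 μ) {t : ℝ} (ht : 0 < t) :
    ∫⁻ ω, (‖T f ω‖ₑ - ENNReal.ofReal t) ∂μ ≤ ∫⁻ ω, (‖f ω‖ₑ - ENNReal.ofReal t) ∂μ := by
  have hmem : MemLp (radialTrunc t ∘ f) 1 μ :=
    (Lp.memLp f).of_le
      ((continuous_radialTrunc ht).comp_aestronglyMeasurable (Lp.aestronglyMeasurable f))
      (ae_of_all _ fun ω => norm_radialTrunc_le_norm ht.le _)
  set h := hmem.toLp _
  have hh : h =ᵐ[μ] radialTrunc t ∘ f := hmem.coeFn_toLp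
  have hh_le : ∀ᵐ ω ∂μ, ‖h ω‖ ≤ t := hh.mono fun ω hω => hω ▸ norm_radialTrunc_le ht.le _
  have hTh_le : ∀ᵐ ω ∂μ, ‖T h ω‖ₑ ≤ ENNReal.ofReal t := by
    have hTh : eLpNormEssSup (T h) μ ≤ ENNReal.ofReal t := by
      rw [← eLpNorm_exponent_top]
      refine (hLinf h (memLp_top_of_bound (Lp.aestronglyMeasurable h) t hh_le)).trans ?_
      rw [eLpNorm_exponent_top]
      exact eLpNormEssSup_le_of_ae_bound hh_le
    exact ae_le_eLpNormEssSup.mono fun ω hω => hω.trans hTh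
  have hTf : T f =ᵐ[μ] T (f - h) + T h := by
    simpa only [← map_add, sub_add_cancel] using Lp.coeFn_add (T (f - h)) (T h)
  calc ∫⁻ ω, (‖T f ω‖ₑ - ENNReal.ofReal t) ∂μ
      ≤ ∫⁻ ω, ‖T (f - h) ω‖ₑ ∂μ := by
        refine lintegral_mono_ae ?_
        filter_upwards [hTf, hTh_le] with ω hTfω hThω
        rw [tsub_le_iff_right, hTfω]
        exact (enorm_add_le _ _).trans (add_le_add_right hThω _)
    _ ≤ ∫⁻ ω, ‖(f - h) ω‖ₑ ∂μ := by
        simpa only [eLpNorm_one_eq_lintegral_enorm] using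
          Lp.eLpNorm_le_eLpNorm_of_norm_le (hL1 (f - h))
    _ = ∫⁻ ω, (‖f ω‖ₑ - ENNReal.ofReal t) ∂μ := by
        refine lintegral_congr_ae ?_
        filter_upwards [Lp.coeFn_sub f h, hh] with ω hsub hhω
        rw [hsub, Pi.sub_apply, hhω, Function.comp_apply, enorm_sub_radialTrunc ht.le]

theorem eLpNorm_le_eLpNorm_of_lintegral_tsub_le {α E F : Type*} [MeasurableSpace α]
    {μ : Measure α} [SFinite μ] [NormedAddCommGroup E] [NormedAddCommGroup F] {p : ℝ≥0∞}
    (hp : 1 < p) (hp_top : p ≠ ∞) {f : α → E} {g : α → F} (hf : AEStronglyMeasurable f μ)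
    (hg : AEStronglyMeasurable g μ)
    (h : ∀ t : ℝ, 0 < t →
      ∫⁻ ω, (‖g ω‖ₑ - ENNReal.ofReal t) ∂μ ≤ ∫⁻ ω, (‖f ω‖ₑ - ENNReal.ofReal t) ∂μ) :
    eLpNorm g p μ ≤ eLpNorm f p μ := by
  have hq : 1 < p.toReal := by simpa using ENNReal.toReal_strict_mono hp_top hp
  rw [eLpNorm_eq_lintegral_rpow_enorm_toReal (zero_lt_one.trans hp).ne' hp_top,
    eLpNorm_eq_lintegral_rpow_enorm_toReal (zero_lt_one.trans hp).ne' hp_top]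
  exact rpow_le_rpow (lintegral_rpow_le_of_lintegral_tsub_le hq hg.enorm hf.enorm h) (by positivity)

theorem dunford_schwartz_Lp_contraction
    {Ω : Type*} [MeasurableSpace Ω] (μ : Measure Ω) [SigmaFinite μ]
    (T : Lp ℂ 1 μ →ₗ[ℂ] Lp ℂ 1 μ)
    (hL1 : ∀ f : Lp ℂ 1 μ, ‖T f‖ ≤ ‖f‖)
    (hLinf : ∀ f : Lp ℂ 1 μ, MemLp (f : Ω → ℂ) ∞ μ →
      eLpNorm ((T f : Lp ℂ 1 μ) : Ω → ℂ) ∞ μ ≤ eLpNorm ((f : Lp ℂ 1 μ) : Ω → ℂ) ∞ μ) :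
    ∀ p : ℝ≥0∞, 1 ≤ p → ∀ f : Lp ℂ 1 μ, MemLp (f : Ω → ℂ) p μ →
      MemLp ((T f : Lp ℂ 1 μ) : Ω → ℂ) p μ ∧
      eLpNorm ((T f : Lp ℂ 1 μ) : Ω → ℂ) p μ ≤ eLpNorm ((f : Lp ℂ 1 μ) : Ω → ℂ) p μ := by
  intro p hp f hf
  suffices h : eLpNorm (T f) p μ ≤ eLpNorm f p μ from
    ⟨⟨Lp.aestronglyMeasurable _, h.trans_lt hf.2⟩, h⟩
  rcases hp.eq_or_lt with rfl | hp
  · exact Lp.eLpNorm_le_eLpNorm_of_norm_le (hL1 f)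
  rcases eq_or_ne p ∞ with rfl | hp_top
  · exact hLinf f hf
  exact eLpNorm_le_eLpNorm_of_lintegral_tsub_le hp hp_top (Lp.aestronglyMeasurable f)
    (Lp.aestronglyMeasurable _) fun t ht =>
      lintegral_enorm_tsub_le_of_contraction T.toAddMonoidHom hL1 hLinf f ht
end

section
/- Let (Ω,μ) be a measure space, and suppose f_t → f almost uniformly as t → ∞ in L⁰(𝕋×Ω, ν×μ), where 𝕋 carries normalized Haar measure ν. Then for ν-almost every z ∈ 𝕋, the slices f_t(z,·) converge almost uniformly to f(z,·) in L⁰(Ω,μ) as t → ∞. -/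
/-!
Choose sets `A n` on which `F t → f` uniformly, with `(ν × μ)(A nᶜ) ≤ 4⁻ⁿ`. By Markov's
inequality the slice `μ (A nᶜ)_z` exceeds `2⁻ⁿ` only on a set of `z` of measure at most `2⁻ⁿ`,
so by Borel–Cantelli, for almost every `z` the slices of `A nᶜ` eventually have measure `< 2⁻ⁿ`.
For such `z` the slices of `A n` are the required sets for `f_t(z, ·) → f(z, ·)`.
-/

open MeasureTheory Filter

/-- Almost uniform convergence of a family `(F t)` to `f` as `t → ∞`. -/
def AUTendsto {X : Type*} [MeasurableSpace X] (m : Measure X)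
    (F : ℝ → X → ℂ) (f : X → ℂ) : Prop :=
  ∀ ε : ℝ, 0 < ε → ∃ A : Set X, MeasurableSet A ∧ m Aᶜ ≤ ENNReal.ofReal ε ∧
    ∀ δ : ℝ, 0 < δ → ∃ t₀ : ℝ, ∀ t : ℝ, t₀ ≤ t → ∀ x ∈ A, ‖F t x - f x‖ ≤ δ

open scoped ENNReal

namespace MeasureTheory.Measure

variable {α β : Type*} [MeasurableSpace α] [MeasurableSpace β] {ν : Measure α} {μ : Measure β}
  [SFinite μ]

lemma mul_measure_setOf_le_slice_le_prod {S : Set (α × β)} (hS : MeasurableSet S)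
    (c : ℝ≥0∞) : c * ν {z | c ≤ μ (Prod.mk z ⁻¹' S)} ≤ ν.prod μ S := by
  rw [prod_apply hS]
  exact mul_meas_ge_le_lintegral₀ (measurable_measure_prodMk_left hS).aemeasurable c

lemma ae_eventually_measure_slice_lt {S : ℕ → Set (α × β)} (hS : ∀ n, MeasurableSet (S n))
    {r : ℕ → ℝ≥0∞} (hr0 : ∀ n, r n ≠ 0) (hr_top : ∀ n, r n ≠ ∞) (hr_sum : ∑' n, r n ≠ ∞)
    (h : ∀ n, ν.prod μ (S n) ≤ r n * r n) :
    ∀ᵐ z ∂ν, ∀ᶠ n in atTop, μ (Prod.mk z ⁻¹' S n) < r n := by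
  have hbad : ∀ n, ν {z | r n ≤ μ (Prod.mk z ⁻¹' S n)} ≤ r n := fun n =>
    (ENNReal.mul_le_mul_iff_right (hr0 n) (hr_top n)).mp
      ((mul_measure_setOf_le_slice_le_prod (hS n) (r n)).trans (h n))
  filter_upwards [ae_eventually_notMem (ne_top_of_le_ne_top hr_sum (ENNReal.tsum_le_tsum hbad))]
    with z hz
  simpa only [Set.mem_ofPred_eq, not_le] using hz

end MeasureTheory.Measure

theorem au_convergence_of_slices
    {Ω : Type*} [MeasurableSpace Ω] (μ : Measure Ω) [SigmaFinite μ]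
    (F : ℝ → UnitAddCircle × Ω → ℂ) (f : UnitAddCircle × Ω → ℂ)
    (hau : AUTendsto ((volume : Measure UnitAddCircle).prod μ) F f) :
    ∀ᵐ z ∂(volume : Measure UnitAddCircle),
      AUTendsto μ (fun t ω => F t (z, ω)) (fun ω => f (z, ω)) := by
  set r : ℕ → ℝ≥0∞ := fun n => 2⁻¹ ^ n
  have hr0 : ∀ n, r n ≠ 0 := fun n => by simp [r]
  have hr_top : ∀ n, r n ≠ ∞ := fun n => by simp [r]
  have hr_sq_top : ∀ n, r n * r n ≠ ∞ := fun n => ENNReal.mul_ne_top (hr_top n) (hr_top n)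
  have hr_lim : Tendsto r atTop (nhds 0) := ENNReal.tendsto_pow_atTop_nhds_zero_iff.2 (by norm_num)
  choose A hA_meas hA_small hA_unif using fun n =>
    hau (r n * r n).toReal (ENNReal.toReal_pos (mul_ne_zero (hr0 n) (hr0 n)) (hr_sq_top n))
  filter_upwards [Measure.ae_eventually_measure_slice_lt (fun n => (hA_meas n).compl) hr0 hr_top
    (by simp [r, ENNReal.tsum_geometric])
    (fun n => (hA_small n).trans_eq (ENNReal.ofReal_toReal (hr_sq_top n)))]
    with z hz ε hε
  obtain ⟨n, hn_slice, hn_small⟩ :=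
    (hz.and ((tendsto_order.1 hr_lim).2 _ (ENNReal.ofReal_pos.2 hε))).exists
  refine ⟨Prod.mk z ⁻¹' A n, (hA_meas n).preimage measurable_prodMk_left,
    (hn_slice.trans hn_small).le, fun δ hδ => ?_⟩
  obtain ⟨t₀, ht₀⟩ := hA_unif n δ hδ
  exact ⟨t₀, fun t ht ω hω => ht₀ t ht (z, ω) hω⟩
end
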